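/- arXiv:1202.0140 — 2 statements merged into one kernel-verified Lean document; each statement's English description precedes it below -/
import Mathlib

section
/- For every code tree ω and every translation parameter a ∈ ℝ^{D𝒜}, the Hausdorff dimension of the code tree fractal satisfies dim_H(A_a^ω) ≤ d^ω. -/
open MeasureTheory Filter Set Topology
open scoped ENNReal Topology

noncomputable section

namespace CodeTreeFractal

variable {Λ : Type*} {E : Type*} [NormedAddCommGroup E] [NormedSpace ℝ E]

/-- The word formed by the first `k` letters of an infinite path `i`. -/
def word (i : ℕ → ℕ) (k : ℕ) : List ℕ := (List.range k).map i

/-- `w` belongs to the tree `Σ_*^ω` determined by the branching numbers `Mlam`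
and the code tree `ω` : at each stage the next letter is below the branching
number of the label of the current node. (Letters are indexed from `0`.) -/
def IsNode (Mlam : Λ → ℕ) (ω : List ℕ → Λ) (w : List ℕ) : Prop :=
  ∀ j : Fin w.length, w.get j < Mlam (ω (w.take j))

/-- `i` is an infinite path of `Σ^ω`. -/
def IsPath (Mlam : Λ → ℕ) (ω : List ℕ → Λ) (i : ℕ → ℕ) : Prop :=
  ∀ k, i k < Mlam (ω (word i k))

/-- The cylinder of infinite sequences beginning with the word `w`. -/
def cylinder (w : List ℕ) : Set (ℕ → ℕ) := {i | word i w.length = w}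

/-- The set `Σ^ω` of infinite paths. -/
def pathSet (Mlam : Λ → ℕ) (ω : List ℕ → Λ) : Set (ℕ → ℕ) := {i | IsPath Mlam ω i}

/-- The composition `T_{i_1}^{ω(∅)} ∘ ⋯ ∘ T_{i_k}^{ω(i_1⋯i_{k-1})}` of the linear
parts along a word. -/
def prodT (T : Λ → ℕ → E →L[ℝ] E) : (List ℕ → Λ) → List ℕ → E →L[ℝ] E
  | _, [] => ContinuousLinearMap.id ℝ E
  | ω, l :: w => (T (ω []) l).comp (prodT T (fun u => ω (l :: u)) w)

/-- The natural projection `Z_a^ω` sending a path to the corresponding point of the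
code tree fractal. -/
def Z (T : Λ → ℕ → E →L[ℝ] E) (tr : Λ → ℕ → E) (ω : List ℕ → Λ) (i : ℕ → ℕ) : E :=
  ∑' k : ℕ, prodT T ω (word i k) (tr (ω (word i k)) (i k))

/-- The code tree fractal `A_a^ω`. -/
def attractor (Mlam : Λ → ℕ) (T : Λ → ℕ → E →L[ℝ] E) (tr : Λ → ℕ → E)
    (ω : List ℕ → Λ) : Set E :=
  {x | ∃ i : ℕ → ℕ, IsPath Mlam ω i ∧ Z T tr ω i = x}

/-- The translation parts obtained from identified translation data
`a ∈ ℝ^{D·𝒜}` through the classes `cls (λ, i)` of the equivalence relation `∼`. -/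
def trOf {A : Type*} {D : ℕ} (cls : Λ → ℕ → A) (a : EuclideanSpace ℝ (A × Fin D))
    (l : Λ) (i : ℕ) : EuclideanSpace ℝ (Fin D) :=
  WithLp.toLp 2 (fun d => a (cls l i, d))

/-- The `j`-th largest singular value (`j ≥ 1`) of a linear map, via the
Courant–Fischer minimax characterization. -/
def singVal (T : E →L[ℝ] E) (j : ℕ) : ℝ :=
  sSup {r : ℝ | ∃ V : Submodule ℝ E, Module.finrank ℝ V = j ∧
    r = sInf {s : ℝ | ∃ v ∈ V, ‖v‖ = 1 ∧ s = ‖T v‖}}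

/-- The singular value function `Φ^α(T) = σ₁ ⋯ σ_{m-1} σ_m^{α-m+1}` where
`m = min (⌊α⌋ + 1) D`. -/
def Phi (D : ℕ) (T : E →L[ℝ] E) (α : ℝ) : ℝ :=
  (∏ i ∈ Finset.range (min (⌊α⌋₊ + 1) D - 1), singVal T (i + 1)) *
    singVal T (min (⌊α⌋₊ + 1) D) ^ (α - ((min (⌊α⌋₊ + 1) D - 1 : ℕ) : ℝ))

/-- The sum `S^ω(k, α)` of the singular value function over the level-`k` nodes. -/
def S (D : ℕ) (Mlam : Λ → ℕ) (T : Λ → ℕ → E →L[ℝ] E) (ω : List ℕ → Λ)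
    (k : ℕ) (α : ℝ) : ℝ :=
  ∑' w : {w : List ℕ // w.length = k ∧ IsNode Mlam ω w}, Phi D (prodT T ω w.1) α

/-- The lower pressure `p_inf^ω(α)`. -/
def pinf (D : ℕ) (Mlam : Λ → ℕ) (T : Λ → ℕ → E →L[ℝ] E) (ω : List ℕ → Λ)
    (α : ℝ) : ℝ :=
  liminf (fun k : ℕ => Real.log (S D Mlam T ω k α) / k) atTop

/-- The upper pressure `p_sup^ω(α)`. -/
def psup (D : ℕ) (Mlam : Λ → ℕ) (T : Λ → ℕ → E →L[ℝ] E) (ω : List ℕ → Λ)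
    (α : ℝ) : ℝ :=
  limsup (fun k : ℕ => Real.log (S D Mlam T ω k α) / k) atTop

/-- The stage-`j` covering sums defining the natural measure `M_j^α(Σ^ω)`. -/
def natStage (D : ℕ) (Mlam : Λ → ℕ) (T : Λ → ℕ → E →L[ℝ] E) (ω : List ℕ → Λ)
    (α : ℝ) (j : ℕ) : ℝ≥0∞ :=
  ⨅ (J : Set (List ℕ)) (_ : ∀ w ∈ J, IsNode Mlam ω w ∧ j ≤ w.length)
    (_ : pathSet Mlam ω ⊆ ⋃ w ∈ J, cylinder w),
    ∑' w : J, ENNReal.ofReal (Phi D (prodT T ω w.1) α)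

/-- The natural measure `M^α(Σ^ω) = lim_j M_j^α(Σ^ω)`. -/
def natMeasure (D : ℕ) (Mlam : Λ → ℕ) (T : Λ → ℕ → E →L[ℝ] E) (ω : List ℕ → Λ)
    (α : ℝ) : ℝ≥0∞ :=
  ⨆ j : ℕ, natStage D Mlam T ω α j

/-- The affinity dimension `d^ω = inf {α ≥ 0 : M^α(Σ^ω) = 0}`. -/
def affinityDim (D : ℕ) (Mlam : Λ → ℕ) (T : Λ → ℕ → E →L[ℝ] E)
    (ω : List ℕ → Λ) : ℝ :=
  sInf {α : ℝ | 0 ≤ α ∧ natMeasure D Mlam T ω α = 0}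

/-- `n` is a neck level of the code tree `ω` : all sub code trees rooted at
level `n` are identical. -/
def IsNeck (Mlam : Λ → ℕ) (ω : List ℕ → Λ) (n : ℕ) : Prop :=
  ∀ w w' : List ℕ, w.length = n → w'.length = n →
    IsNode Mlam ω w → IsNode Mlam ω w' → ∀ u : List ℕ,
      IsNode Mlam ω (w ++ u) → IsNode Mlam ω (w' ++ u) ∧ ω (w ++ u) = ω (w' ++ u)

/-- The subset of `Ω × ℕ^ℕ` of pairs `(ω, N)` forming the space `Ω̃` : with the
convention `N 0 = 0`, the sequence `N 1 < N 2 < ⋯` is a strictly increasing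
sequence of neck levels of `ω`. -/
def neckSpace (Mlam : Λ → ℕ) : Set ((List ℕ → Λ) × (ℕ → ℕ)) :=
  {p | p.2 0 = 0 ∧ StrictMono p.2 ∧ ∀ m, 1 ≤ m → IsNeck Mlam p.1 (p.2 m)}

/-- The shift `Ξ(ω, N) = (ω̂, N̂)`, `N̂ m = N (m+1) - N 1`, where the sub code tree
`ω̂` is rooted at the (leftmost) node of length `N 1`; on `neckSpace` the choice of
this node is irrelevant. -/
def Xi : ((List ℕ → Λ) × (ℕ → ℕ)) → ((List ℕ → Λ) × (ℕ → ℕ)) :=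
  fun p => (fun u => p.1 (List.replicate (p.2 1) 0 ++ u), fun m => p.2 (m + 1) - p.2 1)

/-!
Fix `α ≥ 0` with `M^α(Σ^ω) = 0`. Then for every `n` the paths are covered by cylinders `[w]`,
`|w| ≥ n`, with `∑ Φ^α(T_w)` as small as we like. The projection `Z` maps `[w]` into the ellipsoid
`f_w(B(0, R))`, whose semi-axes are `σ_k(T_w) R`. Cutting it into boxes of side `≈ σ_m(T_w) R`
(`m = ⌊α⌋ + 1`, capped at `D`) needs `≲ Φ^α(T_w) / σ_m(T_w)^α` boxes, so these covers have
`α`-dimensional Hausdorff sums `≲ ∑ Φ^α(T_w)`, and `H^α(A_a^ω) = 0`. Hence `dim_H A_a^ω ≤ α` for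
every such `α`; there is at least one, because `M^α(Σ^ω) ≤ (M σ̄^α)^j` for all `j`.
-/

section Words

variable {Mlam : Λ → ℕ} {ω : List ℕ → Λ}

@[simp] lemma word_length (i : ℕ → ℕ) (k : ℕ) : (word i k).length = k := by
  simp [word]

lemma word_take (i : ℕ → ℕ) {k n : ℕ} (h : k ≤ n) : (word i n).take k = word i k := by
  simp [word, ← List.map_take, List.take_range, Nat.min_eq_left h]

lemma word_getElem (i : ℕ → ℕ) {k n : ℕ} (h : k < n) :
    (word i n)[k]'(by simpa using h) = i k := by
  simp [word]

lemma word_add (i : ℕ → ℕ) (n k : ℕ) :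
    word i (n + k) = word i n ++ word (fun t => i (n + t)) k := by
  simp [word, List.range_add, Function.comp_def]

lemma IsPath.isNode_word {i : ℕ → ℕ} (h : IsPath Mlam ω i) (k : ℕ) :
    IsNode Mlam ω (word i k) := by
  intro j
  have hj : (j : ℕ) < k := by simpa using j.isLt
  simpa [word_getElem i hj, word_take i hj.le] using h j

lemma IsPath.shift {i : ℕ → ℕ} {w : List ℕ} (hi : IsPath Mlam ω i)
    (hw : word i w.length = w) :
    IsPath Mlam (fun u => ω (w ++ u)) (fun k => i (w.length + k)) := by
  intro k
  simpa [word_add, hw] using hi (w.length + k)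

lemma IsNode.head {l : ℕ} {w : List ℕ} (h : IsNode Mlam ω (l :: w)) : l < Mlam (ω []) := by
  simpa using h ⟨0, by simp⟩

lemma IsNode.tail {l : ℕ} {w : List ℕ} (h : IsNode Mlam ω (l :: w)) :
    IsNode Mlam (fun u => ω (l :: u)) w := by
  intro j
  simpa using h ⟨(j : ℕ) + 1, by simp⟩

def level (Mlam : Λ → ℕ) (ω : List ℕ → Λ) (j : ℕ) : Set (List ℕ) :=
  {w | w.length = j ∧ IsNode Mlam ω w}

lemma pathSet_subset_iUnion_level (j : ℕ) :
    pathSet Mlam ω ⊆ ⋃ w ∈ level Mlam ω j, cylinder w := by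
  intro i hi
  exact Set.mem_iUnion₂.mpr ⟨word i j, ⟨word_length i j, hi.isNode_word j⟩, by simp [cylinder]⟩

lemma exists_injective_level {M : ℕ} (hM : ∀ l, Mlam l ≤ M) (j : ℕ) :
    ∃ φ : level Mlam ω j → (Fin j → Fin M), Function.Injective φ := by
  refine ⟨fun w t => ⟨w.1[(t : ℕ)]'(by rw [w.2.1]; exact t.isLt), ?_⟩, ?_⟩
  · exact (by simpa using w.2.2 ⟨t, by rw [w.2.1]; exact t.isLt⟩ : _ < _).trans_le (hM _)
  · intro w w' h
    refine Subtype.ext (List.ext_getElem (w.2.1.trans w'.2.1.symm) fun k h1 h2 => ?_)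
    simpa using congrFun h ⟨k, by rw [← w.2.1]; exact h1⟩

lemma encard_level_le {M : ℕ} (hM : ∀ l, Mlam l ≤ M) (j : ℕ) :
    (level Mlam ω j).encard ≤ (M : ℕ∞) ^ j := by
  obtain ⟨φ, hφ⟩ := exists_injective_level (ω := ω) hM j
  simpa [ENat.card_fun] using ENat.card_le_card_of_injective hφ

end Words

section LinearParts

variable {Mlam : Λ → ℕ}

lemma prodT_append (T : Λ → ℕ → E →L[ℝ] E) :
    ∀ (w u : List ℕ) (ω : List ℕ → Λ),
      prodT T ω (w ++ u) = (prodT T ω w).comp (prodT T (fun v => ω (w ++ v)) u)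
  | [], u, ω => by ext x; simp [prodT]
  | l :: w, u, ω => by
    change (T (ω []) l).comp (prodT T (fun v => ω (l :: v)) (w ++ u)) = _
    rw [prodT_append T w u (fun v => ω (l :: v))]
    rfl

lemma norm_prodT_le {σ : ℝ} (hσ : 0 ≤ σ) {T : Λ → ℕ → E →L[ℝ] E}
    (hT : ∀ l q, q < Mlam l → ‖T l q‖ ≤ σ) :
    ∀ (w : List ℕ) (ω : List ℕ → Λ), IsNode Mlam ω w → ‖prodT T ω w‖ ≤ σ ^ w.length
  | [], _, _ => by simpa [prodT] using ContinuousLinearMap.norm_id_le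
  | l :: w, ω, h =>
    calc ‖prodT T ω (l :: w)‖ ≤ ‖T (ω []) l‖ * ‖prodT T (fun u => ω (l :: u)) w‖ :=
          ContinuousLinearMap.opNorm_comp_le _ _
      _ ≤ σ * σ ^ w.length :=
          mul_le_mul (hT _ _ h.head) (norm_prodT_le hσ hT w _ h.tail) (norm_nonneg _) hσ
      _ = σ ^ (l :: w).length := by rw [List.length_cons, pow_succ']

lemma injective_prodT {T : Λ → ℕ → E →L[ℝ] E}
    (hT : ∀ l q, q < Mlam l → Function.Injective (T l q)) :
    ∀ (w : List ℕ) (ω : List ℕ → Λ), IsNode Mlam ω w → Function.Injective (prodT T ω w)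
  | [], _, _ => fun _ _ h => by simpa [prodT] using h
  | l :: w, ω, h => (hT _ _ h.head).comp (injective_prodT hT w _ h.tail)

end LinearParts

section Projection

variable {Mlam : Λ → ℕ} {ω : List ℕ → Λ} {T : Λ → ℕ → E →L[ℝ] E}
  {tr : Λ → ℕ → E} {σ C : ℝ}

lemma norm_prodT_word_apply_le (hσ0 : 0 ≤ σ) (hT : ∀ l q, q < Mlam l → ‖T l q‖ ≤ σ)
    (htr : ∀ l q, ‖tr l q‖ ≤ C) {i : ℕ → ℕ} (hi : IsPath Mlam ω i) (k : ℕ) :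
    ‖prodT T ω (word i k) (tr (ω (word i k)) (i k))‖ ≤ σ ^ k * C :=
  calc ‖prodT T ω (word i k) (tr (ω (word i k)) (i k))‖
      ≤ ‖prodT T ω (word i k)‖ * ‖tr (ω (word i k)) (i k)‖ := ContinuousLinearMap.le_opNorm _ _
    _ ≤ σ ^ k * C := by
      refine mul_le_mul ?_ (htr _ _) (norm_nonneg _) (pow_nonneg hσ0 _)
      simpa using norm_prodT_le hσ0 hT (word i k) ω (hi.isNode_word k)

lemma summable_prodT_word_apply [CompleteSpace E] (hσ0 : 0 ≤ σ) (hσ1 : σ < 1)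
    (hT : ∀ l q, q < Mlam l → ‖T l q‖ ≤ σ) (htr : ∀ l q, ‖tr l q‖ ≤ C)
    {i : ℕ → ℕ} (hi : IsPath Mlam ω i) :
    Summable fun k => prodT T ω (word i k) (tr (ω (word i k)) (i k)) :=
  .of_norm_bounded ((summable_geometric_of_lt_one hσ0 hσ1).mul_right C)
    (norm_prodT_word_apply_le hσ0 hT htr hi)

lemma norm_Z_le [CompleteSpace E] (hσ0 : 0 ≤ σ) (hσ1 : σ < 1)
    (hT : ∀ l q, q < Mlam l → ‖T l q‖ ≤ σ) (htr : ∀ l q, ‖tr l q‖ ≤ C)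
    {i : ℕ → ℕ} (hi : IsPath Mlam ω i) :
    ‖Z T tr ω i‖ ≤ (1 - σ)⁻¹ * C :=
  calc ‖Z T tr ω i‖ ≤ ∑' k : ℕ, σ ^ k * C :=
        tsum_of_norm_bounded ((summable_geometric_of_lt_one hσ0 hσ1).mul_right C).hasSum
          (norm_prodT_word_apply_le hσ0 hT htr hi)
    _ = (1 - σ)⁻¹ * C := by rw [tsum_mul_right, tsum_geometric_of_lt_one hσ0 hσ1]

/-- The translation part `f_w(0)` of the composed affine map `f_w` along the word `w`. -/
def translationPart (T : Λ → ℕ → E →L[ℝ] E) (tr : Λ → ℕ → E) (ω : List ℕ → Λ)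
    (w : List ℕ) : E :=
  ∑ k ∈ Finset.range w.length, prodT T ω (w.take k) (tr (ω (w.take k)) (w.getD k 0))

lemma Z_eq_translationPart_add [CompleteSpace E] (hσ0 : 0 ≤ σ) (hσ1 : σ < 1)
    (hT : ∀ l q, q < Mlam l → ‖T l q‖ ≤ σ) (htr : ∀ l q, ‖tr l q‖ ≤ C)
    {i : ℕ → ℕ} (hi : IsPath Mlam ω i) {w : List ℕ} (hw : word i w.length = w) :
    Z T tr ω i = translationPart T tr ω w +
      prodT T ω w (Z T tr (fun u => ω (w ++ u)) (fun k => i (w.length + k))) := by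
  rw [Z, ← (summable_prodT_word_apply hσ0 hσ1 hT htr hi).sum_add_tsum_nat_add w.length]
  congr 1
  · refine Finset.sum_congr rfl fun k hk => ?_
    have hk : k < w.length := Finset.mem_range.mp hk
    have hw' : w.take k = word i k := by rw [← hw, word_take i hk.le]
    have hwk : w.getD k 0 = i k := by
      conv_lhs => rw [← hw]
      rw [List.getD_eq_getElem _ _ (by simpa using hk), word_getElem i hk]
    rw [hw', hwk]
  · have hsum := summable_prodT_word_apply hσ0 hσ1 hT htr (hi.shift hw)
    rw [Z, ContinuousLinearMap.map_tsum _ hsum]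
    refine tsum_congr fun k => ?_
    rw [Nat.add_comm k, word_add, hw, prodT_append]
    rfl

end Projection

section SingularValues

lemma sInf_norm_apply_le_opNorm (T : E →L[ℝ] E) (V : Submodule ℝ E) :
    sInf {s : ℝ | ∃ v ∈ V, ‖v‖ = 1 ∧ s = ‖T v‖} ≤ ‖T‖ := by
  rcases Set.eq_empty_or_nonempty {s : ℝ | ∃ v ∈ V, ‖v‖ = 1 ∧ s = ‖T v‖} with
    h | ⟨_, v, hv, hv1, rfl⟩
  · rw [h, Real.sInf_empty]
    exact norm_nonneg T
  · have hbdd : BddBelow {s : ℝ | ∃ v ∈ V, ‖v‖ = 1 ∧ s = ‖T v‖} :=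
      ⟨0, by rintro _ ⟨u, -, -, rfl⟩; exact norm_nonneg _⟩
    exact (csInf_le hbdd ⟨v, hv, hv1, rfl⟩).trans (by simpa [hv1] using T.le_opNorm v)

lemma singVal_nonneg (T : E →L[ℝ] E) (j : ℕ) : 0 ≤ singVal T j :=
  Real.sSup_nonneg <| by
    rintro _ ⟨V, -, rfl⟩
    exact Real.sInf_nonneg <| by
      rintro _ ⟨v, -, -, rfl⟩
      exact norm_nonneg _

lemma singVal_le_opNorm (T : E →L[ℝ] E) (j : ℕ) : singVal T j ≤ ‖T‖ :=
  Real.sSup_le (by rintro _ ⟨V, -, rfl⟩; exact sInf_norm_apply_le_opNorm T V) (norm_nonneg T)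

lemma le_singVal {T : E →L[ℝ] E} {j : ℕ} {c : ℝ} (V : Submodule ℝ E)
    (hV : Module.finrank ℝ V = j) (hne : ∃ v ∈ V, ‖v‖ = 1)
    (hc : ∀ v ∈ V, ‖v‖ = 1 → c ≤ ‖T v‖) : c ≤ singVal T j := by
  obtain ⟨v, hv, hv1⟩ := hne
  have hinf : c ≤ sInf {s : ℝ | ∃ v ∈ V, ‖v‖ = 1 ∧ s = ‖T v‖} :=
    le_csInf ⟨_, v, hv, hv1, rfl⟩ (by rintro _ ⟨u, hu, hu1, rfl⟩; exact hc u hu hu1)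
  refine hinf.trans (le_csSup ⟨‖T‖, ?_⟩ ⟨V, hV, rfl⟩)
  rintro _ ⟨W, -, rfl⟩
  exact sInf_norm_apply_le_opNorm T W

lemma Phi_exponent_nonneg {α : ℝ} (hα : 0 ≤ α) (D : ℕ) :
    0 ≤ α - ((min (⌊α⌋₊ + 1) D - 1 : ℕ) : ℝ) := by
  have : min (⌊α⌋₊ + 1) D - 1 ≤ ⌊α⌋₊ := by omega
  linarith [(Nat.cast_le (α := ℝ)).mpr this, Nat.floor_le hα]

lemma Phi_le_opNorm_rpow {D : ℕ} {α : ℝ} (hα : 0 ≤ α) (T : E →L[ℝ] E) :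
    Phi D T α ≤ ‖T‖ ^ α := by
  have hexp := Phi_exponent_nonneg hα D
  set m := min (⌊α⌋₊ + 1) D
  calc Phi D T α ≤ ‖T‖ ^ (m - 1) * ‖T‖ ^ (α - ((m - 1 : ℕ) : ℝ)) := by
        refine mul_le_mul ?_ (Real.rpow_le_rpow (singVal_nonneg T m) (singVal_le_opNorm T m) hexp)
          (Real.rpow_nonneg (singVal_nonneg T m) _) (pow_nonneg (norm_nonneg T) _)
        simpa using Finset.prod_le_prod (s := Finset.range (m - 1))
          (fun i _ => singVal_nonneg T (i + 1)) (fun i _ => singVal_le_opNorm T (i + 1))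
    _ = ‖T‖ ^ α := by
        rw [← Real.rpow_natCast, ← Real.rpow_add_of_nonneg (norm_nonneg T) (Nat.cast_nonneg _) hexp,
          add_sub_cancel]

end SingularValues

lemma exists_fin_abs_sub_le {n : ℕ} (hn : 0 < n) {b c : ℝ} (hb : 0 < b) (hc : |c| ≤ b) :
    ∃ κ : Fin n, |c - (-b + (2 * (κ : ℝ) + 1) * (b / n))| ≤ b / n := by
  have hn' : (0 : ℝ) < n := Nat.cast_pos.mpr hn
  set y := (c + b) * n / (2 * b)
  have hy0 : 0 ≤ y := div_nonneg (mul_nonneg (by linarith [neg_abs_le c]) hn'.le) (by positivity)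
  have hyn : y ≤ n := by
    rw [div_le_iff₀ (by positivity)]
    nlinarith [le_abs_self c]
  obtain ⟨κ, hκy, hyκ, hκn⟩ : ∃ κ : ℕ, (κ : ℝ) ≤ y ∧ y ≤ κ + 1 ∧ κ < n := by
    rcases le_or_gt ⌊y⌋₊ (n - 1) with h | h
    · exact ⟨⌊y⌋₊, Nat.floor_le hy0, (Nat.lt_floor_add_one y).le, by omega⟩
    · refine ⟨n - 1, ?_, by rw [Nat.cast_sub hn, Nat.cast_one, sub_add_cancel]; exact hyn, by omega⟩
      exact (Nat.cast_le.mpr h.le).trans (Nat.floor_le hy0)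
  refine ⟨⟨κ, hκn⟩, ?_⟩
  have hscale : c - (-b + (2 * (κ : ℝ) + 1) * (b / n)) = 2 * (b / n) * (y - (κ + 1 / 2)) := by
    simp only [y]
    field_simp
    ring
  have hmid : |y - (κ + 1 / 2)| ≤ 1 / 2 := abs_le.mpr ⟨by linarith, by linarith⟩
  calc |c - (-b + (2 * (κ : ℝ) + 1) * (b / n))| = 2 * (b / n) * |y - (κ + 1 / 2)| := by
        rw [hscale, abs_mul, abs_of_pos (by positivity)]
    _ ≤ 2 * (b / n) * (1 / 2) := by gcongr
    _ = b / n := by ring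

lemma prod_ceil_div_mul_rpow_le {s : ℕ → ℝ} (hs : Antitone s) {p D : ℕ} (hpD : p ≤ D)
    (hp : 0 < s p) (α : ℝ) :
    (∏ k ∈ Finset.range D, (⌈s k / s p⌉₊ : ℝ)) * s p ^ α ≤
      2 ^ D * ((∏ k ∈ Finset.range p, s k) * s p ^ (α - p)) := by
  set r := s p
  set N : ℕ → ℝ := fun k => ⌈s k / r⌉₊
  have htail : ∏ k ∈ Finset.Ico p D, N k ≤ 1 := by
    refine Finset.prod_le_one (fun _ _ => Nat.cast_nonneg _) fun k hk => ?_
    have hk : s k / r ≤ 1 := (div_le_one hp).mpr (hs (Finset.mem_Ico.mp hk).1)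
    have : ⌈s k / r⌉₊ ≤ 1 := Nat.ceil_le.mpr (by simpa using hk)
    simpa [N] using this
  have hhead : ∏ k ∈ Finset.range p, N k * r ≤ ∏ k ∈ Finset.range p, 2 * s k := by
    refine Finset.prod_le_prod (fun _ _ => by positivity) fun k hk => ?_
    have hrk : r ≤ s k := hs (Finset.mem_range.mp hk).le
    calc N k * r ≤ (s k / r + 1) * r :=
          mul_le_mul_of_nonneg_right
            (Nat.ceil_lt_add_one (div_nonneg (hp.le.trans hrk) hp.le)).le hp.le
      _ = s k + r := by field_simp
      _ ≤ 2 * s k := by linarith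
  have hs_nonneg : ∀ k ∈ Finset.range p, 0 ≤ s k := fun k hk =>
    hp.le.trans (hs (Finset.mem_range.mp hk).le)
  calc (∏ k ∈ Finset.range D, N k) * r ^ α
      = (∏ k ∈ Finset.range p, N k) * (∏ k ∈ Finset.Ico p D, N k) * (r ^ p * r ^ (α - p)) := by
        rw [Finset.prod_range_mul_prod_Ico _ hpD, ← Real.rpow_natCast,
          ← Real.rpow_add hp, add_sub_cancel]
    _ ≤ (∏ k ∈ Finset.range p, N k) * 1 * (r ^ p * r ^ (α - p)) := by
        gcongr
    _ = (∏ k ∈ Finset.range p, N k * r) * r ^ (α - p) := by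
        rw [Finset.prod_mul_distrib, Finset.prod_const, Finset.card_range]
        ring
    _ ≤ (∏ k ∈ Finset.range p, 2 * s k) * r ^ (α - p) := by gcongr
    _ = 2 ^ p * ((∏ k ∈ Finset.range p, s k) * r ^ (α - p)) := by
        rw [Finset.prod_mul_distrib, Finset.prod_const, Finset.card_range]
        ring
    _ ≤ 2 ^ D * ((∏ k ∈ Finset.range p, s k) * r ^ (α - p)) := by
        gcongr
        · exact mul_nonneg (Finset.prod_nonneg hs_nonneg) (Real.rpow_nonneg hp.le _)
        · norm_num

section SingularValueDecomposition

open scoped InnerProductSpace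

variable {F : Type*} [NormedAddCommGroup F] [InnerProductSpace ℝ F] [FiniteDimensional ℝ F]
  {D : ℕ}

/-- Right singular vectors of `T`, ordered by decreasing singular value. -/
def svdBasis (T : F →L[ℝ] F) (hD : Module.finrank ℝ F = D) : OrthonormalBasis (Fin D) ℝ F :=
  (T : F →ₗ[ℝ] F).isSymmetric_adjoint_comp_self.eigenvectorBasis hD

lemma inner_apply_svdBasis (T : F →L[ℝ] F) (hD : Module.finrank ℝ F = D) (k l : Fin D) :
    ⟪T (svdBasis T hD k), T (svdBasis T hD l)⟫_ℝ =
      if k = l then (T : F →ₗ[ℝ] F).singularValues k ^ 2 else 0 := by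
  have hS := (T : F →ₗ[ℝ] F).isSymmetric_adjoint_comp_self.apply_eigenvectorBasis hD k
  change ⟪(T : F →ₗ[ℝ] F) _, (T : F →ₗ[ℝ] F) _⟫_ℝ = _
  rw [← LinearMap.adjoint_inner_left]
  change ⟪(LinearMap.adjoint (T : F →ₗ[ℝ] F) ∘ₗ (T : F →ₗ[ℝ] F)) (svdBasis T hD k), _⟫_ℝ = _
  rw [svdBasis, hS, ← LinearMap.sq_singularValues_fin _ hD, real_inner_smul_left,
    orthonormal_iff_ite.mp (OrthonormalBasis.orthonormal _)]
  split_ifs <;> simp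

lemma norm_apply_sum_svdBasis_sq (T : F →L[ℝ] F) (hD : Module.finrank ℝ F = D) {ι : Type*}
    [Fintype ι] {φ : ι → Fin D} (hφ : Function.Injective φ) (c : ι → ℝ) :
    ‖T (∑ q, c q • svdBasis T hD (φ q))‖ ^ 2 =
      ∑ q, (c q * (T : F →ₗ[ℝ] F).singularValues (φ q)) ^ 2 := by
  classical
  rw [← real_inner_self_eq_norm_sq, map_sum]
  simp only [map_smul, sum_inner, inner_sum, real_inner_smul_left, real_inner_smul_right,
    inner_apply_svdBasis, hφ.eq_iff]
  simp only [mul_ite, mul_zero, Finset.sum_ite_eq', Finset.mem_univ, if_true]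
  exact Finset.sum_congr rfl fun q _ => by ring

/-- The span of the first `k + 1` right singular vectors witnesses the minimax
characterization. -/
lemma singularValues_le_singVal (T : F →L[ℝ] F) (hD : Module.finrank ℝ F = D) {k : ℕ}
    (hk : k < D) : (T : F →ₗ[ℝ] F).singularValues k ≤ singVal T (k + 1) := by
  set σ := (T : F →ₗ[ℝ] F).singularValues
  set e : Fin (k + 1) → F := fun q => svdBasis T hD (Fin.castLE hk q)
  have he : Orthonormal ℝ e := (svdBasis T hD).orthonormal.comp _ (Fin.castLE_injective hk)
  refine le_singVal (Submodule.span ℝ (Set.range e)) ?_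
    ⟨e 0, Submodule.subset_span (Set.mem_range_self _), he.1 _⟩ fun v hv hv1 => ?_
  · rw [finrank_span_eq_card he.linearIndependent, Fintype.card_fin]
  obtain ⟨c, rfl⟩ := (Submodule.mem_span_range_iff_exists_fun ℝ).mp hv
  have hc : ∑ q, c q ^ 2 = 1 := by
    have := real_inner_self_eq_norm_sq (∑ q, c q • e q)
    rw [hv1, he.inner_sum] at this
    simpa [sq] using this
  have hsq : σ k ^ 2 ≤ ‖T (∑ q, c q • e q)‖ ^ 2 := by
    rw [norm_apply_sum_svdBasis_sq T hD (Fin.castLE_injective hk) c, ← mul_one (σ k ^ 2), ← hc,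
      Finset.mul_sum]
    refine Finset.sum_le_sum fun q _ => ?_
    have hq : σ k ≤ σ (Fin.castLE hk q) :=
      LinearMap.singularValues_antitone _ (Nat.lt_succ_iff.mp q.isLt)
    rw [mul_pow, mul_comm]
    exact mul_le_mul_of_nonneg_left
      (pow_le_pow_left₀ (LinearMap.singularValues_nonneg _ _) hq 2) (sq_nonneg _)
  exact (pow_le_pow_iff_left₀ (LinearMap.singularValues_nonneg _ _) (norm_nonneg _)
    two_ne_zero).mp hsq

lemma prod_singularValues_mul_rpow_le_Phi (T : F →L[ℝ] F) (hD : Module.finrank ℝ F = D)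
    (hD0 : 0 < D) {α : ℝ} (hα : 0 ≤ α) :
    (∏ k ∈ Finset.range (min (⌊α⌋₊ + 1) D - 1), (T : F →ₗ[ℝ] F).singularValues k) *
      (T : F →ₗ[ℝ] F).singularValues (min (⌊α⌋₊ + 1) D - 1) ^
        (α - ((min (⌊α⌋₊ + 1) D - 1 : ℕ) : ℝ)) ≤ Phi D T α := by
  have hexp := Phi_exponent_nonneg hα D
  set m := min (⌊α⌋₊ + 1) D
  have hm : m - 1 < D := by omega
  have hm' : m - 1 + 1 = m := by omega
  refine mul_le_mul (Finset.prod_le_prod (fun _ _ => LinearMap.singularValues_nonneg _ _)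
      fun k hk => singularValues_le_singVal T hD ((Finset.mem_range.mp hk).trans hm))
    (Real.rpow_le_rpow (LinearMap.singularValues_nonneg _ _)
      ((singularValues_le_singVal T hD hm).trans_eq (by rw [hm'])) hexp)
    (Real.rpow_nonneg (LinearMap.singularValues_nonneg _ _) _)
    (Finset.prod_nonneg fun k _ => singVal_nonneg T (k + 1))

end SingularValueDecomposition

section EllipsoidCover

open scoped InnerProductSpace

variable {F : Type*} [NormedAddCommGroup F] [InnerProductSpace ℝ F] [FiniteDimensional ℝ F]
  {D : ℕ}

/-- Cut the `k`-th semi-axis of the ellipsoid `T '' closedBall 0 R` into `n k` pieces. -/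
lemma image_closedBall_subset_iUnion_closedBall (T : F →L[ℝ] F) (hD : Module.finrank ℝ F = D)
    {R r : ℝ} (hR : 0 < R) (hr : 0 ≤ r) (n : Fin D → ℕ) (hn : ∀ k, 0 < n k)
    (hσ : ∀ k : Fin D, (T : F →ₗ[ℝ] F).singularValues k ≤ n k * r) :
    ∃ ctr : (∀ k, Fin (n k)) → F,
      T '' Metric.closedBall 0 R ⊆ ⋃ κ, Metric.closedBall (ctr κ) (√D * r * R) := by
  set e := svdBasis T hD
  set σ := (T : F →ₗ[ℝ] F).singularValues
  set g : ∀ k, Fin (n k) → ℝ := fun k κ => -R + (2 * (κ : ℝ) + 1) * (R / n k)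
  refine ⟨fun κ => T (∑ k, g k (κ k) • e k), ?_⟩
  rintro _ ⟨v, hv, rfl⟩
  have hc : ∀ k, |⟪e k, v⟫_ℝ| ≤ R := fun k =>
    (abs_real_inner_le_norm _ _).trans (by simpa [e.orthonormal.1 k] using hv)
  choose κ hκ using fun k => exists_fin_abs_sub_le (hn k) hR (hc k)
  refine Set.mem_iUnion.mpr ⟨κ, ?_⟩
  have hdiff : T v - T (∑ k, g k (κ k) • e k) = T (∑ k, (⟪e k, v⟫_ℝ - g k (κ k)) • e k) := by
    conv_lhs => rw [← e.sum_repr' v]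
    simp only [← map_sub, ← Finset.sum_sub_distrib, sub_smul]
  have hterm : ∀ k, ((⟪e k, v⟫_ℝ - g k (κ k)) * σ k) ^ 2 ≤ (r * R) ^ 2 := by
    intro k
    have hnk : (0 : ℝ) < n k := Nat.cast_pos.mpr (hn k)
    have h1 : |⟪e k, v⟫_ℝ - g k (κ k)| * σ k ≤ R / n k * (n k * r) :=
      mul_le_mul (hκ k) (hσ k) (LinearMap.singularValues_nonneg _ _) (div_pos hR hnk).le
    rw [← sq_abs, abs_mul, abs_of_nonneg (LinearMap.singularValues_nonneg _ _)]
    exact pow_le_pow_left₀ (mul_nonneg (abs_nonneg _) (LinearMap.singularValues_nonneg _ _))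
      (h1.trans_eq (by field_simp)) 2
  have hsq : ‖T v - T (∑ k, g k (κ k) • e k)‖ ^ 2 ≤ (√D * r * R) ^ 2 :=
    calc ‖T v - T (∑ k, g k (κ k) • e k)‖ ^ 2 = ∑ k, ((⟪e k, v⟫_ℝ - g k (κ k)) * σ k) ^ 2 := by
          rw [hdiff]
          exact norm_apply_sum_svdBasis_sq T hD Function.injective_id _
      _ ≤ ∑ _k : Fin D, (r * R) ^ 2 := Finset.sum_le_sum fun k _ => hterm k
      _ = (√D * r * R) ^ 2 := by
          rw [Finset.sum_const, Finset.card_univ, Fintype.card_fin, nsmul_eq_mul, mul_assoc,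
            mul_pow √(D : ℝ), Real.sq_sqrt (Nat.cast_nonneg D)]
  rw [Metric.mem_closedBall, dist_eq_norm]
  exact (pow_le_pow_iff_left₀ (norm_nonneg _) (by positivity) two_ne_zero).mp hsq

lemma ediam_closedBall_le_ofReal {X : Type*} [PseudoMetricSpace X] (x : X) (ρ : ℝ) :
    Metric.ediam (Metric.closedBall x ρ) ≤ ENNReal.ofReal (2 * ρ) :=
  Metric.ediam_le_of_forall_dist_le fun p hp q hq => by
    have := dist_triangle_right p q x
    rw [Metric.mem_closedBall] at hp hq
    linarith

lemma sum_ediam_closedBall_rpow_le {X : Type*} [PseudoMetricSpace X] {ι : Type*} [Fintype ι]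
    (c : ι → X) {ρ α : ℝ} (hρ : 0 ≤ ρ) (hα : 0 ≤ α) :
    ∑ κ, Metric.ediam (Metric.closedBall (c κ) ρ) ^ α ≤
      ENNReal.ofReal (Fintype.card ι * (2 * ρ) ^ α) :=
  calc ∑ κ, Metric.ediam (Metric.closedBall (c κ) ρ) ^ α
      ≤ ∑ _κ : ι, ENNReal.ofReal ((2 * ρ) ^ α) := Finset.sum_le_sum fun κ _ => by
        rw [← ENNReal.ofReal_rpow_of_nonneg (by positivity) hα]
        exact ENNReal.rpow_le_rpow (ediam_closedBall_le_ofReal _ _) hα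
    _ = ENNReal.ofReal (Fintype.card ι * (2 * ρ) ^ α) := by
        rw [Finset.sum_const, Finset.card_univ, nsmul_eq_mul, ENNReal.ofReal_mul (by positivity),
          ENNReal.ofReal_natCast]

/-- Balls of radius `√D σ_m(T) R`, `m = min (⌊α⌋ + 1) D`: there are at most
`2^D Φ^α(T) / σ_m(T)^α` of them. -/
lemma exists_cover_affine_image_closedBall (hD : Module.finrank ℝ F = D) (hD0 : 0 < D)
    {T : F →L[ℝ] F} (hT : Function.Injective T) (y : F) {α R : ℝ} (hα : 0 ≤ α) (hR : 0 < R) :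
    ∃ (ι : Type) (_ : Fintype ι) (t : ι → Set F),
      (fun x => y + T x) '' Metric.closedBall 0 R ⊆ ⋃ κ, t κ ∧
      (∀ κ, Metric.ediam (t κ) ≤ ENNReal.ofReal (2 * (√D * ‖T‖ * R))) ∧
      ∑ κ, Metric.ediam (t κ) ^ α ≤ ENNReal.ofReal (2 ^ D * (2 * √D * R) ^ α * Phi D T α) := by
  set σ := (T : F →ₗ[ℝ] F).singularValues
  have hσpos : ∀ k < D, 0 < σ k := fun k hk =>
    (LinearMap.injective_iff_forall_lt_finrank_singularValues_pos _).mp hT k (hD ▸ hk)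
  set p := min (⌊α⌋₊ + 1) D - 1
  have hpD : p < D := by omega
  have hr : 0 < σ p := hσpos p hpD
  set n : Fin D → ℕ := fun k => ⌈σ k / σ p⌉₊
  obtain ⟨ctr, hctr⟩ := image_closedBall_subset_iUnion_closedBall T hD hR hr.le n
    (fun k => Nat.ceil_pos.mpr (div_pos (hσpos k k.isLt) hr))
    (fun k => (div_le_iff₀ hr).mp (Nat.le_ceil _))
  set ρ := √D * σ p * R
  have hc : 0 ≤ 2 * √D * R := by positivity
  refine ⟨∀ k, Fin (n k), inferInstance, fun κ => Metric.closedBall (y + ctr κ) ρ, ?_, ?_, ?_⟩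
  · rintro _ ⟨x, hx, rfl⟩
    obtain ⟨κ, hκ⟩ := Set.mem_iUnion.mp (hctr ⟨x, hx, rfl⟩)
    exact Set.mem_iUnion.mpr ⟨κ, by simpa [Metric.mem_closedBall] using hκ⟩
  · intro κ
    have hr' : σ p ≤ ‖T‖ := (singularValues_le_singVal T hD hpD).trans (singVal_le_opNorm T _)
    refine (ediam_closedBall_le_ofReal _ _).trans (ENNReal.ofReal_le_ofReal ?_)
    change 2 * (√D * σ p * R) ≤ _
    gcongr
  refine (sum_ediam_closedBall_rpow_le _ (by positivity) hα).trans (ENNReal.ofReal_le_ofReal ?_)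
  have hcard : (Fintype.card (∀ k, Fin (n k)) : ℝ) = ∏ k ∈ Finset.range D, (⌈σ k / σ p⌉₊ : ℝ) := by
    simp only [Fintype.card_pi, Fintype.card_fin, Nat.cast_prod]
    exact Fin.prod_univ_eq_prod_range (fun k => (⌈σ k / σ p⌉₊ : ℝ)) D
  rw [hcard, show 2 * ρ = (2 * √D * R) * σ p by ring, Real.mul_rpow hc hr.le]
  calc (∏ k ∈ Finset.range D, (⌈σ k / σ p⌉₊ : ℝ)) * ((2 * √D * R) ^ α * σ p ^ α)
      = (2 * √D * R) ^ α * ((∏ k ∈ Finset.range D, (⌈σ k / σ p⌉₊ : ℝ)) * σ p ^ α) := by ring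
    _ ≤ (2 * √D * R) ^ α * (2 ^ D * ((∏ k ∈ Finset.range p, σ k) * σ p ^ (α - p))) :=
        mul_le_mul_of_nonneg_left
          (prod_ceil_div_mul_rpow_le (LinearMap.singularValues_antitone _) hpD.le hr α)
          (Real.rpow_nonneg hc α)
    _ ≤ (2 * √D * R) ^ α * (2 ^ D * Phi D T α) := by
        gcongr
        exact prod_singularValues_mul_rpow_le_Phi T hD hD0 hα
    _ = 2 ^ D * (2 * √D * R) ^ α * Phi D T α := by ring

end EllipsoidCover

section NaturalMeasure

variable {D M : ℕ} {Mlam : Λ → ℕ} {T : Λ → ℕ → E →L[ℝ] E} {ω : List ℕ → Λ} {σ α : ℝ}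

lemma natStage_mono : Monotone (natStage D Mlam T ω α) := fun _ _ hjj' =>
  le_iInf fun J => le_iInf fun hJ => le_iInf fun hcov =>
    iInf_le_of_le J <| iInf_le_of_le (fun w hw => ⟨(hJ w hw).1, hjj'.trans (hJ w hw).2⟩) <|
      iInf_le _ hcov

/-- Covering `Σ^ω` by the level-`j` cylinders. -/
lemma natStage_le_pow (hM : ∀ l, Mlam l ≤ M) (hσ : 0 ≤ σ)
    (hT : ∀ l q, q < Mlam l → ‖T l q‖ ≤ σ) (hα : 0 ≤ α) (j : ℕ) :
    natStage D Mlam T ω α j ≤ ENNReal.ofReal ((M * σ ^ α) ^ j) := by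
  have hPhi : ∀ w ∈ level Mlam ω j, Phi D (prodT T ω w) α ≤ (σ ^ α) ^ j := fun w hw =>
    calc Phi D (prodT T ω w) α ≤ ‖prodT T ω w‖ ^ α := Phi_le_opNorm_rpow hα _
      _ ≤ (σ ^ j) ^ α := Real.rpow_le_rpow (norm_nonneg _)
          (hw.1 ▸ norm_prodT_le hσ hT w ω hw.2) hα
      _ = (σ ^ α) ^ j := by
          rw [← Real.rpow_natCast, ← Real.rpow_natCast, ← Real.rpow_mul hσ, ← Real.rpow_mul hσ,
            mul_comm]
  calc natStage D Mlam T ω α j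
      ≤ ∑' w : level Mlam ω j, ENNReal.ofReal (Phi D (prodT T ω w) α) :=
        iInf_le_of_le _ <| iInf_le_of_le (fun w hw => ⟨hw.2, hw.1.ge⟩) <|
          iInf_le _ (pathSet_subset_iUnion_level j)
    _ ≤ ∑' _w : level Mlam ω j, ENNReal.ofReal ((σ ^ α) ^ j) :=
        ENNReal.tsum_le_tsum fun w => ENNReal.ofReal_le_ofReal (hPhi w w.2)
    _ = (level Mlam ω j).encard * ENNReal.ofReal ((σ ^ α) ^ j) := ENNReal.tsum_const _
    _ ≤ ((M : ℕ∞) ^ j : ℕ∞) * ENNReal.ofReal ((σ ^ α) ^ j) := by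
        gcongr
        exact_mod_cast encard_level_le hM j
    _ = ENNReal.ofReal ((M * σ ^ α) ^ j) := by
        rw [mul_pow, ENNReal.ofReal_mul (by positivity), ENNReal.ofReal_pow (Nat.cast_nonneg _),
          ENNReal.ofReal_natCast]
        simp

lemma natMeasure_eq_zero_of_mul_rpow_lt_one (hM : ∀ l, Mlam l ≤ M) (hσ : 0 ≤ σ)
    (hT : ∀ l q, q < Mlam l → ‖T l q‖ ≤ σ) (hα : 0 ≤ α) (h : M * σ ^ α < 1) :
    natMeasure D Mlam T ω α = 0 := by
  refine ENNReal.iSup_eq_zero.mpr fun j => nonpos_iff_eq_zero.mp ?_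
  have hlim : Tendsto (fun k : ℕ => ENNReal.ofReal ((M * σ ^ α) ^ k)) atTop (𝓝 0) := by
    rw [← ENNReal.ofReal_zero]
    exact ENNReal.tendsto_ofReal (tendsto_pow_atTop_nhds_zero_of_lt_one (by positivity) h)
  exact ge_of_tendsto hlim <| eventually_atTop.mpr
    ⟨j, fun k hk => (natStage_mono hk).trans (natStage_le_pow hM hσ hT hα k)⟩

lemma exists_natMeasure_eq_zero (hM : ∀ l, Mlam l ≤ M) (hσ0 : 0 ≤ σ) (hσ1 : σ < 1)
    (hT : ∀ l q, q < Mlam l → ‖T l q‖ ≤ σ) : ∃ α, 0 ≤ α ∧ natMeasure D Mlam T ω α = 0 := by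
  have hlim : Tendsto (fun n : ℕ => (M : ℝ) * σ ^ n) atTop (𝓝 0) := by
    simpa using (tendsto_pow_atTop_nhds_zero_of_lt_one hσ0 hσ1).const_mul (M : ℝ)
  obtain ⟨n, hn⟩ := (hlim.eventually_lt_const one_pos).exists
  exact ⟨n, n.cast_nonneg, natMeasure_eq_zero_of_mul_rpow_lt_one hM hσ0 hT n.cast_nonneg
    (by rwa [Real.rpow_natCast])⟩

end NaturalMeasure

lemma hausdorffMeasure_eq_zero_of_forall_cover {X : Type*} [EMetricSpace X] [MeasurableSpace X]
    [BorelSpace X] {d : ℝ} {s : Set X}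
    (h : ∀ ε > (0 : ℝ≥0∞), ∀ δ > (0 : ℝ≥0∞), ∃ (ι : Type) (_ : Countable ι) (t : ι → Set X),
      s ⊆ ⋃ i, t i ∧ (∀ i, Metric.ediam (t i) ≤ ε) ∧ ∑' i, Metric.ediam (t i) ^ d ≤ δ) :
    μH[d] s = 0 := by
  refine nonpos_iff_eq_zero.mp (ENNReal.le_of_forall_pos_le_add fun δ hδ _ => ?_)
  choose ι hι t hst hdiam hsum using fun n : ℕ =>
    h (n : ℝ≥0∞)⁻¹ (ENNReal.inv_pos.mpr (ENNReal.natCast_ne_top n)) δ (by exact_mod_cast hδ)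
  calc μH[d] s ≤ liminf (fun n => ∑' i, Metric.ediam (t n i) ^ d) atTop :=
        Measure.hausdorffMeasure_le_liminf_tsum d s _ ENNReal.tendsto_inv_nat_nhds_zero t
          (.of_forall hdiam) (.of_forall hst)
    _ ≤ δ := (liminf_le_liminf (.of_forall hsum)).trans_eq (liminf_const _)
    _ = 0 + δ := (zero_add _).symm

section Attractor

variable {Mlam : Λ → ℕ} {T : Λ → ℕ → E →L[ℝ] E} {tr : Λ → ℕ → E} {ω : List ℕ → Λ} {σ C : ℝ}

lemma attractor_subset_iUnion_image_closedBall [CompleteSpace E] (hσ0 : 0 ≤ σ) (hσ1 : σ < 1)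
    (hT : ∀ l q, q < Mlam l → ‖T l q‖ ≤ σ) (htr : ∀ l q, ‖tr l q‖ ≤ C)
    {R : ℝ} (hR : (1 - σ)⁻¹ * C ≤ R) {J : Set (List ℕ)}
    (hJ : pathSet Mlam ω ⊆ ⋃ w ∈ J, cylinder w) :
    attractor Mlam T tr ω ⊆
      ⋃ w ∈ J, (fun x => translationPart T tr ω w + prodT T ω w x) '' Metric.closedBall 0 R := by
  rintro _ ⟨i, hi, rfl⟩
  obtain ⟨w, hwJ, hw⟩ := Set.mem_iUnion₂.mp (hJ hi)
  refine Set.mem_iUnion₂.mpr ⟨w, hwJ, _, ?_, (Z_eq_translationPart_add hσ0 hσ1 hT htr hi hw).symm⟩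
  exact mem_closedBall_zero_iff.mpr ((norm_Z_le hσ0 hσ1 hT htr (hi.shift hw)).trans hR)

end Attractor

section HausdorffMeasure

variable {F : Type*} [NormedAddCommGroup F] [InnerProductSpace ℝ F] [FiniteDimensional ℝ F]
  {D : ℕ} {Mlam : Λ → ℕ} {T : Λ → ℕ → F →L[ℝ] F}
  {tr : Λ → ℕ → F} {ω : List ℕ → Λ} {σ C α : ℝ}

lemma exists_cover_attractor (hD : Module.finrank ℝ F = D) (hD0 : 0 < D)
    (hTinj : ∀ l q, q < Mlam l → Function.Injective (T l q)) (hσ0 : 0 ≤ σ) (hσ1 : σ < 1)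
    (hT : ∀ l q, q < Mlam l → ‖T l q‖ ≤ σ) (htr : ∀ l q, ‖tr l q‖ ≤ C) (hα : 0 ≤ α)
    {R : ℝ} (hR0 : 0 < R) (hR : (1 - σ)⁻¹ * C ≤ R) {n : ℕ} {J : Set (List ℕ)}
    (hJ : ∀ w ∈ J, IsNode Mlam ω w ∧ n ≤ w.length)
    (hcov : pathSet Mlam ω ⊆ ⋃ w ∈ J, cylinder w) :
    ∃ (ι : Type) (_ : Countable ι) (t : ι → Set F), attractor Mlam T tr ω ⊆ ⋃ i, t i ∧
      (∀ i, Metric.ediam (t i) ≤ ENNReal.ofReal (2 * (√D * σ ^ n * R))) ∧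
      ∑' i, Metric.ediam (t i) ^ α ≤ ENNReal.ofReal (2 ^ D * (2 * √D * R) ^ α) *
        ∑' w : J, ENNReal.ofReal (Phi D (prodT T ω w.1) α) := by
  choose ι hι t ht hdiam hsum using fun w : J =>
    exists_cover_affine_image_closedBall hD hD0 (injective_prodT hTinj w.1 ω (hJ w.1 w.2).1)
      (translationPart T tr ω w.1) hα hR0
  refine ⟨Σ w : J, ι w, inferInstance, fun p => t p.1 p.2, ?_, ?_, ?_⟩
  · intro x hx
    obtain ⟨w, hw, hxw⟩ := Set.mem_iUnion₂.mp
      (attractor_subset_iUnion_image_closedBall hσ0 hσ1 hT htr hR hcov hx)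
    obtain ⟨κ, hκ⟩ := Set.mem_iUnion.mp (ht ⟨w, hw⟩ hxw)
    exact Set.mem_iUnion.mpr ⟨⟨⟨w, hw⟩, κ⟩, hκ⟩
  · rintro ⟨w, κ⟩
    refine (hdiam w κ).trans (ENNReal.ofReal_le_ofReal ?_)
    have hnorm : ‖prodT T ω w.1‖ ≤ σ ^ n := (norm_prodT_le hσ0 hT w.1 ω (hJ w.1 w.2).1).trans
      (pow_le_pow_of_le_one hσ0 hσ1.le (hJ w.1 w.2).2)
    gcongr
  · calc ∑' p : Σ w : J, ι w, Metric.ediam (t p.1 p.2) ^ α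
        = ∑' w : J, ∑' κ, Metric.ediam (t w κ) ^ α := ENNReal.tsum_sigma' _
      _ ≤ ∑' w : J, ENNReal.ofReal (2 ^ D * (2 * √D * R) ^ α) *
            ENNReal.ofReal (Phi D (prodT T ω w.1) α) := by
          refine ENNReal.tsum_le_tsum fun w => ?_
          rw [tsum_fintype, ← ENNReal.ofReal_mul (by positivity)]
          exact hsum w
      _ = _ := ENNReal.tsum_mul_left

lemma hausdorffMeasure_attractor_eq_zero [MeasurableSpace F] [BorelSpace F]
    (hD : Module.finrank ℝ F = D) (hD0 : 0 < D)
    (hTinj : ∀ l q, q < Mlam l → Function.Injective (T l q)) (hσ0 : 0 ≤ σ) (hσ1 : σ < 1)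
    (hT : ∀ l q, q < Mlam l → ‖T l q‖ ≤ σ) (htr : ∀ l q, ‖tr l q‖ ≤ C) (hα : 0 ≤ α)
    (h0 : natMeasure D Mlam T ω α = 0) : μH[α] (attractor Mlam T tr ω) = 0 := by
  set R := max ((1 - σ)⁻¹ * C) 1
  have hR0 : 0 < R := zero_lt_one.trans_le (le_max_right _ _)
  set K := ENNReal.ofReal (2 ^ D * (2 * √D * R) ^ α)
  have hK0 : K ≠ 0 := (ENNReal.ofReal_pos.mpr (by positivity)).ne'
  refine hausdorffMeasure_eq_zero_of_forall_cover fun ε hε δ hδ => ?_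
  obtain ⟨n, hn⟩ : ∃ n : ℕ, ENNReal.ofReal (2 * (√D * σ ^ n * R)) ≤ ε := by
    have hlim : Tendsto (fun n : ℕ => ENNReal.ofReal (2 * (√D * σ ^ n * R))) atTop (𝓝 0) := by
      rw [← ENNReal.ofReal_zero]
      refine ENNReal.tendsto_ofReal ?_
      simpa using ((tendsto_pow_atTop_nhds_zero_of_lt_one hσ0 hσ1).const_mul √D).mul_const R
        |>.const_mul 2
    exact (hlim.eventually (ge_mem_nhds hε)).exists
  have hstage : natStage D Mlam T ω α n < δ / K := by
    have : natStage D Mlam T ω α n ≤ natMeasure D Mlam T ω α := le_iSup _ n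
    rw [h0, nonpos_iff_eq_zero] at this
    rw [this]
    exact ENNReal.div_pos hδ.ne' ENNReal.ofReal_ne_top
  simp only [natStage, iInf_lt_iff] at hstage
  obtain ⟨J, hJ, hcov, hsumJ⟩ := hstage
  obtain ⟨ι, hι, t, hst, hdiam, hsum⟩ :=
    exists_cover_attractor hD hD0 hTinj hσ0 hσ1 hT htr hα hR0 (le_max_left _ _) hJ hcov
  refine ⟨ι, hι, t, hst, fun i => (hdiam i).trans hn, hsum.trans ?_⟩
  calc K * ∑' w : J, ENNReal.ofReal (Phi D (prodT T ω w.1) α) ≤ K * (δ / K) := by gcongr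
    _ = δ := ENNReal.mul_div_cancel hK0 ENNReal.ofReal_ne_top

end HausdorffMeasure

lemma norm_trOf_le {A : Type*} [Fintype A] {D : ℕ} (cls : Λ → ℕ → A)
    (a : EuclideanSpace ℝ (A × Fin D)) (l : Λ) (q : ℕ) : ‖trOf cls a l q‖ ≤ ‖a‖ := by
  rw [EuclideanSpace.norm_eq, EuclideanSpace.norm_eq, Fintype.sum_prod_type]
  exact Real.sqrt_le_sqrt <| Finset.single_le_sum (f := fun c => ∑ d : Fin D, ‖a (c, d)‖ ^ 2)
    (fun c _ => Finset.sum_nonneg fun d _ => sq_nonneg _) (Finset.mem_univ (cls l q))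

theorem statement2_general
    {Λ A : Type*} [Fintype A] (D : ℕ) (hD : 1 ≤ D)
    (Mlam : Λ → ℕ) (M : ℕ) (hMsup : ∀ l, Mlam l ≤ M)
    (T : Λ → ℕ → EuclideanSpace ℝ (Fin D) →L[ℝ] EuclideanSpace ℝ (Fin D))
    (hTns : ∀ l i, i < Mlam l → Function.Injective (T l i))
    (σbar : ℝ) (hσbar : σbar < 1)
    (hTnorm : ∀ l i, i < Mlam l → ‖T l i‖ ≤ σbar)
    (cls : Λ → ℕ → A)
    (ω : List ℕ → Λ) (a : EuclideanSpace ℝ (A × Fin D)) :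
    dimH (attractor Mlam T (trOf cls a) ω)
      ≤ ENNReal.ofReal (affinityDim D Mlam T ω) := by
  have hσ0 : 0 ≤ max σbar 0 := le_max_right _ _
  have hσ1 : max σbar 0 < 1 := max_lt hσbar one_pos
  have hT : ∀ l i, i < Mlam l → ‖T l i‖ ≤ max σbar 0 := fun l i h =>
    (hTnorm l i h).trans (le_max_left _ _)
  have hdim : ∀ α, 0 ≤ α → natMeasure D Mlam T ω α = 0 →
      dimH (attractor Mlam T (trOf cls a) ω) ≤ ENNReal.ofReal α := fun α hα h0 =>
    dimH_le_of_hausdorffMeasure_ne_top <| by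
      rw [Real.coe_toNNReal α hα, hausdorffMeasure_attractor_eq_zero finrank_euclideanSpace_fin
        hD hTns hσ0 hσ1 hT (norm_trOf_le cls a) hα h0]
      exact ENNReal.zero_ne_top
  obtain ⟨α₀, hα₀⟩ := exists_natMeasure_eq_zero (D := D) (ω := ω) hMsup hσ0 hσ1 hT
  rw [affinityDim, Monotone.map_csInf_of_continuousAt ENNReal.continuous_ofReal.continuousAt
    ENNReal.ofReal_mono ⟨α₀, hα₀⟩ ⟨0, fun α hα => hα.1⟩]
  exact le_sInf fun _ ⟨α, ⟨hα, h0⟩, hαx⟩ => hαx ▸ hdim α hα h0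

/-- inequality \eqref{upperbound}: for every code tree `ω` and every
translation parameter `a ∈ ℝ^{D·𝒜}`, `dim_H (A_a^ω) ≤ d^ω`. -/
theorem statement2
    {Λ A : Type*} [Fintype A] (D : ℕ) (hD : 1 ≤ D)
    (Mlam : Λ → ℕ) (hM1 : ∀ l, 1 ≤ Mlam l) (M : ℕ) (hMsup : ∀ l, Mlam l ≤ M)
    (T : Λ → ℕ → EuclideanSpace ℝ (Fin D) →L[ℝ] EuclideanSpace ℝ (Fin D))
    (hTns : ∀ l i, i < Mlam l → Function.Injective (T l i))
    (σbar : ℝ) (hσbar : σbar < 1)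
    (hTnorm : ∀ l i, i < Mlam l → ‖T l i‖ ≤ σbar)
    (cls : Λ → ℕ → A)
    (hcls : ∀ l i j, i < Mlam l → j < Mlam l → cls l i = cls l j → i = j)
    (ω : List ℕ → Λ) (a : EuclideanSpace ℝ (A × Fin D)) :
    dimH (attractor Mlam T (trOf cls a) ω)
      ≤ ENNReal.ofReal (affinityDim D Mlam T ω) :=
  statement2_general D hD Mlam M hMsup T hTns σbar hσbar hTnorm cls ω a

end CodeTreeFractal
end
end

section
/- Let T and U be non-singular linear maps on ℝ² and 0 ≤ α ≤ 2. Then Φ^α(TU) ≥ Φ̲^α(T) Φ^α(U). -/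
/-!
For a `2 × 2` real matrix `A`, `σ₁ σ₂ = |det A|`: the adjugate of `A` is `J Aᵀ J⁻¹` for the
rotation `J` by a right angle, so it has the same operator norm `σ₁` as `A`, and
`A adj A = adj A A = det A • 1` then pins `σ₂` down to `|det A| / σ₁`. Hence `σ₁ σ₂` is
multiplicative. For `α ≤ 1` the claim is `σ₂(T) σ₁(U) ≤ σ₁(TU)`; for `α = 1 + β` it follows
by interpolating between that inequality and the multiplicativity of `σ₁ σ₂`:
`σ₁(TU) σ₂(TU)^β = σ₁(TU)^(1-β) (σ₁σ₂(T) σ₁σ₂(U))^β ≥ (σ₂(T) σ₁(U))^(1-β) (σ₁σ₂(T) σ₁σ₂(U))^β`.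
-/

open scoped ENNReal Topology

noncomputable section

namespace CodeTreeFractal

/-- The first (largest) singular value of a linear map on `ℝ²`: the operator norm. -/
def sv1 (T : EuclideanSpace ℝ (Fin 2) →L[ℝ] EuclideanSpace ℝ (Fin 2)) : ℝ := ‖T‖

/-- The second (smallest) singular value of a linear map on `ℝ²`: the minimum of
`‖T v‖` over unit vectors `v`. -/
def sv2 (T : EuclideanSpace ℝ (Fin 2) →L[ℝ] EuclideanSpace ℝ (Fin 2)) : ℝ :=
  sInf {s : ℝ | ∃ v : EuclideanSpace ℝ (Fin 2), ‖v‖ = 1 ∧ s = ‖T v‖}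

/-- The singular value function `Φ^α` on `ℝ²`, for `0 ≤ α ≤ 2`. -/
def Phi2 (T : EuclideanSpace ℝ (Fin 2) →L[ℝ] EuclideanSpace ℝ (Fin 2)) (α : ℝ) : ℝ :=
  if α ≤ 1 then sv1 T ^ α else sv1 T * sv2 T ^ (α - 1)

/-- The lower singular value function `Φ̲^α` on `ℝ²`, for `0 ≤ α ≤ 2`. -/
def PhiLow2 (T : EuclideanSpace ℝ (Fin 2) →L[ℝ] EuclideanSpace ℝ (Fin 2)) (α : ℝ) : ℝ :=
  if α ≤ 1 then sv2 T ^ α else sv2 T * sv1 T ^ (α - 1)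

theorem _root_.Real.mul_rpow_le_mul_rpow_of_le_of_mul_eq {x y s t β : ℝ} (hx : 0 ≤ x)
    (hy : 0 ≤ y) (ht : 0 ≤ t) (hxs : x ≤ s) (hst : s * t = x * y) (hβ : β ≤ 1) :
    x * y ^ β ≤ s * t ^ β := by
  have hs : 0 ≤ s := hx.trans hxs
  calc x * y ^ β = x ^ (1 - β) * (x * y) ^ β := by
        rw [Real.mul_rpow hx hy, ← mul_assoc, ← Real.rpow_add' hx (by simp), sub_add_cancel,
          Real.rpow_one]
    _ ≤ s ^ (1 - β) * (x * y) ^ β := by gcongr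
    _ = s * t ^ β := by
        rw [← hst, Real.mul_rpow hs ht, ← mul_assoc, ← Real.rpow_add' hs (by simp), sub_add_cancel,
          Real.rpow_one]

open Matrix
open scoped Matrix.Norms.L2Operator

theorem _root_.Matrix.adjugate_fin_two_eq_rotation_conj {R : Type*} [CommRing R]
    (A : Matrix (Fin 2) (Fin 2) R) :
    A.adjugate = !![0, -1; 1, 0] * Aᵀ * (!![0, -1; 1, 0])ᵀ := by
  ext i j
  fin_cases i <;> fin_cases j <;>
    simp [adjugate_fin_two, mul_apply, vecMul, dotProduct, Fin.sum_univ_two]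

theorem _root_.Matrix.l2_opNorm_adjugate_fin_two (A : Matrix (Fin 2) (Fin 2) ℝ) :
    ‖A.adjugate‖ = ‖A‖ := by
  let J : unitaryGroup (Fin 2) ℝ := ⟨!![0, -1; 1, 0], by
    rw [mem_unitaryGroup_iff]
    ext i j
    fin_cases i <;> fin_cases j <;> simp [mul_apply, Fin.sum_univ_two]⟩
  have hconj : A.adjugate = J * Aᴴ * (star J : unitaryGroup (Fin 2) ℝ) := by
    rw [adjugate_fin_two_eq_rotation_conj, Unitary.coe_star, star_eq_conjTranspose,
      conjTranspose_eq_transpose_of_trivial, conjTranspose_eq_transpose_of_trivial]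
  rw [hconj, CStarRing.norm_mul_coe_unitary, CStarRing.norm_coe_unitary_mul,
    l2_opNorm_conjTranspose]

theorem _root_.ContinuousLinearMap.exists_norm_eq_one_norm_apply_eq_opNorm
    {E F : Type*} [NormedAddCommGroup E] [NormedSpace ℝ E] [ProperSpace E] [Nontrivial E]
    [NormedAddCommGroup F] [NormedSpace ℝ F] (T : E →L[ℝ] F) :
    ∃ x, ‖x‖ = 1 ∧ ‖T x‖ = ‖T‖ := by
  obtain ⟨x, hx, hmax⟩ := (isCompact_sphere (0 : E) 1).exists_sSup_image_eq
    (NormedSpace.sphere_nonempty.mpr zero_le_one)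
    (by fun_prop : Continuous fun x ↦ ‖T x‖).continuousOn
  exact ⟨x, mem_sphere_zero_iff_norm.mp hx, hmax ▸ T.sSup_sphere_eq_norm⟩

local notation "ℝ²" => EuclideanSpace ℝ (Fin 2)

section sv2

variable (T : ℝ² →L[ℝ] ℝ²)

theorem sv1_nonneg : 0 ≤ sv1 T :=
  norm_nonneg T

theorem sv2_le_norm_apply {v : ℝ²} (hv : ‖v‖ = 1) : sv2 T ≤ ‖T v‖ :=
  csInf_le ⟨0, by rintro s ⟨v, -, rfl⟩; positivity⟩ ⟨v, hv, rfl⟩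

theorem le_sv2 {c : ℝ} (h : ∀ v : ℝ², ‖v‖ = 1 → c ≤ ‖T v‖) : c ≤ sv2 T :=
  le_csInf ⟨_, EuclideanSpace.single 0 1, by simp, rfl⟩ (by rintro s ⟨v, hv, rfl⟩; exact h v hv)

theorem sv2_nonneg : 0 ≤ sv2 T :=
  le_sv2 T fun _ _ ↦ norm_nonneg _

theorem sv2_mul_norm_le_norm_apply (x : ℝ²) : sv2 T * ‖x‖ ≤ ‖T x‖ := by
  rcases eq_or_ne x 0 with rfl | hx
  · simp
  have hx' : 0 < ‖x‖ := norm_pos_iff.mpr hx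
  have h := sv2_le_norm_apply T (v := ‖x‖⁻¹ • x) (by rw [norm_smul, norm_inv, norm_norm,
    inv_mul_cancel₀ hx'.ne'])
  rw [map_smul, norm_smul, norm_inv, norm_norm, le_inv_mul_iff₀ hx'] at h
  linarith

theorem sv2_mul_sv1_le_sv1_comp (U : ℝ² →L[ℝ] ℝ²) : sv2 T * sv1 U ≤ sv1 (T.comp U) := by
  obtain ⟨x, hx, hUx⟩ := U.exists_norm_eq_one_norm_apply_eq_opNorm
  calc sv2 T * sv1 U = sv2 T * ‖U x‖ := by rw [hUx, sv1]
    _ ≤ ‖T (U x)‖ := sv2_mul_norm_le_norm_apply T (U x)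
    _ ≤ ‖T.comp U‖ := by simpa [hx] using (T.comp U).le_opNorm x

end sv2

theorem _root_.Matrix.det_toEuclideanCLM {𝕜 n : Type*} [RCLike 𝕜] [Fintype n] [DecidableEq n]
    (A : Matrix n n 𝕜) :
    LinearMap.det ((toEuclideanCLM (n := n) (𝕜 := 𝕜) A : EuclideanSpace 𝕜 n →L[𝕜] _) :
      EuclideanSpace 𝕜 n →ₗ[𝕜] _) = A.det := by
  rw [coe_toEuclideanCLM_eq_toEuclideanLin, toEuclideanLin_eq_toLin_orthonormal,
    LinearMap.det_toLin]

theorem sv1_mul_sv2_toEuclideanCLM (A : Matrix (Fin 2) (Fin 2) ℝ) :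
    sv1 (toEuclideanCLM (n := Fin 2) (𝕜 := ℝ) A) * sv2 (toEuclideanCLM (n := Fin 2) (𝕜 := ℝ) A) =
      |A.det| := by
  set T : ℝ² →L[ℝ] ℝ² := toEuclideanCLM (n := Fin 2) (𝕜 := ℝ) A
  set B : ℝ² →L[ℝ] ℝ² := toEuclideanCLM (n := Fin 2) (𝕜 := ℝ) A.adjugate
  have hB : ‖B‖ = ‖T‖ := l2_opNorm_adjugate_fin_two A
  have hTB (x : ℝ²) : T (B x) = A.det • x := by
    have : T * B = A.det • 1 := by rw [← map_mul, mul_adjugate, map_smul, map_one]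
    simpa using DFunLike.congr_fun this x
  have hBT (x : ℝ²) : B (T x) = A.det • x := by
    have : B * T = A.det • 1 := by rw [← map_mul, adjugate_mul, map_smul, map_one]
    simpa using DFunLike.congr_fun this x
  rw [sv1]
  rcases (norm_nonneg T).eq_or_lt with hT | hT
  · have : A = 0 := by simpa [T] using hT.symm
    simp [← hT, this]
  apply le_antisymm
  · obtain ⟨u, hu, hBu⟩ := B.exists_norm_eq_one_norm_apply_eq_opNorm
    have := sv2_mul_norm_le_norm_apply T (B u)
    rwa [hTB, hBu, hB, norm_smul, hu, mul_one, mul_comm] at this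
  · rw [← div_le_iff₀' hT]
    refine le_sv2 T fun v hv ↦ (div_le_iff₀' hT).mpr ?_
    calc |A.det| = ‖B (T v)‖ := by rw [hBT, norm_smul, hv, mul_one, Real.norm_eq_abs]
      _ ≤ ‖B‖ * ‖T v‖ := B.le_opNorm _
      _ = ‖T‖ * ‖T v‖ := by rw [hB]

theorem sv1_mul_sv2 (T : ℝ² →L[ℝ] ℝ²) : sv1 T * sv2 T = |LinearMap.det (T : ℝ² →ₗ[ℝ] ℝ²)| := by
  have := sv1_mul_sv2_toEuclideanCLM ((toEuclideanCLM (n := Fin 2) (𝕜 := ℝ)).symm T)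
  rwa [← det_toEuclideanCLM, StarAlgEquiv.apply_symm_apply] at this

theorem sv1_mul_sv2_comp (T U : ℝ² →L[ℝ] ℝ²) :
    sv1 (T.comp U) * sv2 (T.comp U) = sv1 T * sv2 T * (sv1 U * sv2 U) := by
  rw [sv1_mul_sv2, sv1_mul_sv2, sv1_mul_sv2, ContinuousLinearMap.toLinearMap_comp,
    LinearMap.det_comp, abs_mul]

theorem statement14_general
    (T U : EuclideanSpace ℝ (Fin 2) →L[ℝ] EuclideanSpace ℝ (Fin 2))
    (α : ℝ) (hα0 : 0 ≤ α) (hα2 : α ≤ 2) :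
    PhiLow2 T α * Phi2 U α ≤ Phi2 (T.comp U) α := by
  have hσ : sv2 T * sv1 U ≤ sv1 (T.comp U) := sv2_mul_sv1_le_sv1_comp T U
  have hσ_nonneg : 0 ≤ sv2 T * sv1 U := mul_nonneg (sv2_nonneg T) (sv1_nonneg U)
  unfold PhiLow2 Phi2
  split_ifs with hα1
  · rw [← Real.mul_rpow (sv2_nonneg T) (sv1_nonneg U)]
    exact Real.rpow_le_rpow hσ_nonneg hσ hα0
  · calc sv2 T * sv1 T ^ (α - 1) * (sv1 U * sv2 U ^ (α - 1))
        = sv2 T * sv1 U * (sv1 T * sv2 U) ^ (α - 1) := by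
          rw [Real.mul_rpow (sv1_nonneg T) (sv2_nonneg U)]; ring
      _ ≤ sv1 (T.comp U) * sv2 (T.comp U) ^ (α - 1) :=
        Real.mul_rpow_le_mul_rpow_of_le_of_mul_eq hσ_nonneg
          (mul_nonneg (sv1_nonneg T) (sv2_nonneg U)) (sv2_nonneg _) hσ
          (by rw [sv1_mul_sv2_comp]; ring) (by linarith)

/-- Lemma `philowerbound`: for non-singular linear maps `T, U` on `ℝ²` and
`0 ≤ α ≤ 2`, `Φ^α(TU) ≥ Φ̲^α(T) Φ^α(U)`. -/
theorem statement14
    (T U : EuclideanSpace ℝ (Fin 2) →L[ℝ] EuclideanSpace ℝ (Fin 2))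
    (hT : Function.Injective T) (hU : Function.Injective U)
    (α : ℝ) (hα0 : 0 ≤ α) (hα2 : α ≤ 2) :
    PhiLow2 T α * Phi2 U α ≤ Phi2 (T.comp U) α :=
  statement14_general T U α hα0 hα2

end CodeTreeFractal
end
end
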